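/- Let η ≥ 0 and set H_η(z) = log z + (3/2) η z^{2/3} and R_η(z) = z/(1 + η z^{2/3}) for z > 0 (extended by R_η(z) = z for z ≤ 0). Suppose x, y : (−∞,0] → ℝ are differentiable, satisfy x'(s) = y(s) − x(s) and y'(s) = 2 y(s) − e^{2s} R_η(e^{−2s} y(s)) x(s) for all s ≤ 0, satisfy x(s) > 0 and y(s) > 0 for all s ≤ 0, and suppose e^{−2s} y(s) → P and e^{−2s} x(s) → P/3 as s → −∞, for some P > 0. Then, with m := x(0), one has 2 H_η(P) − R_η(P) · m ≤ m + 2 H_η(3m). -/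

import Mathlib

open Real Filter Set

/-- The simplified Fermi–Dirac nonlinearity `R_η(z) = z/(1 + η z^{2/3})` for
`z > 0`, extended by `R_η(z) = z` for `z ≤ 0`. -/
noncomputable def Rfun (η z : ℝ) : ℝ :=
  if 0 < z then z / (1 + η * z ^ ((2 : ℝ) / 3)) else z

/-- The enthalpy `H_η(z) = log z + (3/2) η z^{2/3}`. -/
noncomputable def Hfun (η z : ℝ) : ℝ :=
  Real.log z + 3 / 2 * η * z ^ ((2 : ℝ) / 3)

/-!
With `ρ = e^{-2s} y` the system gives `ρ' = -R_η(ρ) x`, and since `H_η' · R_η = 1` this reads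
`(H_η ∘ ρ)' = -x`. Hence `V = 2 H_η(ρ) + y - 2x` has `V' = -e^{2s} R_η(ρ) x`. As `ρ` decreases
from `P`, `R_η(ρ) ≤ R_η(P)`, and as `e^s x` increases to `m`, the correction `R_η(P) m e^s`
makes `V` nondecreasing; its limit at `-∞` is `2 H_η(P)`, so `2 H_η(P) ≤ V(0) + R_η(P) m`.
Finally `e^s (y - 3x)` is nonincreasing with limit `0` at `-∞`, so `y(0) ≤ 3m`, which bounds
`V(0)` by `2 H_η(3m) + m`.
-/

open Topology

section Enthalpy

variable {η : ℝ}

theorem hasDerivAt_Hfun {z : ℝ} (hz : 0 < z) :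
    HasDerivAt (Hfun η) (z⁻¹ + η * z ^ (-(1 / 3) : ℝ)) z := by
  have hpow := (hasDerivAt_rpow_const (p := (2 / 3 : ℝ)) (Or.inl hz.ne')).const_mul (3 / 2 * η)
  refine ((hasDerivAt_log hz.ne').add hpow).congr_deriv ?_
  rw [show (2 / 3 : ℝ) - 1 = -(1 / 3) by norm_num]
  ring

theorem continuousAt_Hfun {z : ℝ} (hz : 0 < z) : ContinuousAt (Hfun η) z :=
  (hasDerivAt_Hfun hz).continuousAt

theorem Hfun_le_Hfun (hη : 0 ≤ η) {a b : ℝ} (ha : 0 < a) (hab : a ≤ b) :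
    Hfun η a ≤ Hfun η b := by
  unfold Hfun
  gcongr

theorem deriv_Hfun_mul_Rfun (hη : 0 ≤ η) {z : ℝ} (hz : 0 < z) :
    (z⁻¹ + η * z ^ (-(1 / 3) : ℝ)) * Rfun η z = 1 := by
  have hden : 0 < 1 + η * z ^ ((2 : ℝ) / 3) := by positivity
  have hpow : z ^ (-(1 / 3) : ℝ) * z = z ^ ((2 : ℝ) / 3) := by
    rw [← rpow_add_one hz.ne']; norm_num
  rw [Rfun, if_pos hz, mul_div_assoc', add_mul, inv_mul_cancel₀ hz.ne', mul_assoc, hpow,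
    div_self hden.ne']

theorem Rfun_eq_inv (hη : 0 ≤ η) {z : ℝ} (hz : 0 < z) :
    Rfun η z = (z⁻¹ + η * z ^ (-(1 / 3) : ℝ))⁻¹ :=
  eq_inv_of_mul_eq_one_right (deriv_Hfun_mul_Rfun hη hz)

theorem Rfun_pos (hη : 0 ≤ η) {z : ℝ} (hz : 0 < z) : 0 < Rfun η z := by
  rw [Rfun_eq_inv hη hz]
  positivity

theorem Rfun_le_Rfun (hη : 0 ≤ η) {a b : ℝ} (ha : 0 < a) (hab : a ≤ b) :
    Rfun η a ≤ Rfun η b := by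
  have hb := ha.trans_le hab
  rw [Rfun_eq_inv hη ha, Rfun_eq_inv hη hb]
  have hpow : b ^ (-(1 / 3) : ℝ) ≤ a ^ (-(1 / 3) : ℝ) := rpow_le_rpow_of_nonpos ha hab (by norm_num)
  gcongr

end Enthalpy

section Monotonicity

variable {f f' : ℝ → ℝ} {D : Set ℝ}

theorem monotoneOn_of_hasDerivWithinAt_nonneg' (hD : Convex ℝ D)
    (hf : ∀ s ∈ D, HasDerivWithinAt f (f' s) D s) (hf' : ∀ s ∈ D, 0 ≤ f' s) :
    MonotoneOn f D :=
  monotoneOn_of_hasDerivWithinAt_nonneg hD (fun s hs => (hf s hs).continuousWithinAt)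
    (fun s hs => (hf s (interior_subset hs)).mono interior_subset)
    (fun s hs => hf' s (interior_subset hs))

variable {a L : ℝ}

theorem le_of_hasDerivWithinAt_nonneg_of_tendsto_atBot
    (hf : ∀ s ≤ a, HasDerivWithinAt f (f' s) (Iic a) s) (hf' : ∀ s ≤ a, 0 ≤ f' s)
    (hL : Tendsto f atBot (𝓝 L)) {s : ℝ} (hs : s ≤ a) : L ≤ f s := by
  have hmono := monotoneOn_of_hasDerivWithinAt_nonneg' (convex_Iic a) hf hf'
  refine le_of_tendsto hL ?_
  filter_upwards [eventually_le_atBot s] with t ht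
  exact hmono (ht.trans hs) hs ht

theorem le_of_hasDerivWithinAt_nonpos_of_tendsto_atBot
    (hf : ∀ s ≤ a, HasDerivWithinAt f (f' s) (Iic a) s) (hf' : ∀ s ≤ a, f' s ≤ 0)
    (hL : Tendsto f atBot (𝓝 L)) {s : ℝ} (hs : s ≤ a) : f s ≤ L :=
  neg_le_neg_iff.1 <| le_of_hasDerivWithinAt_nonneg_of_tendsto_atBot
    (fun s hs => (hf s hs).neg) (fun s hs => neg_nonneg.2 (hf' s hs)) hL.neg hs

end Monotonicity

theorem tendsto_exp_mul_mul_atBot {g : ℝ → ℝ} {c L : ℝ} (hc : 0 < c)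
    (hg : Tendsto g atBot (𝓝 L)) : Tendsto (fun s => exp (c * s) * g s) atBot (𝓝 0) := by
  simpa using (tendsto_exp_atBot.comp (tendsto_id.const_mul_atBot hc)).mul hg

/-- `ρ = e^{-2s} y`, whose limit `P` at `-∞` is `‖ρ‖_∞`. -/
noncomputable def density (y : ℝ → ℝ) (s : ℝ) : ℝ :=
  exp (-2 * s) * y s

theorem tendsto_zero_of_tendsto_density {f : ℝ → ℝ} {L : ℝ}
    (hf : Tendsto (density f) atBot (𝓝 L)) : Tendsto f atBot (𝓝 0) :=
  (tendsto_exp_mul_mul_atBot two_pos hf).congr fun s => by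
    rw [density, ← mul_assoc, ← exp_add]
    simp

structure IsPositiveSolution (R x y : ℝ → ℝ) : Prop where
  hasDerivWithinAt_fst : ∀ s ≤ (0 : ℝ), HasDerivWithinAt x (y s - x s) (Iic 0) s
  hasDerivWithinAt_snd : ∀ s ≤ (0 : ℝ),
    HasDerivWithinAt y (2 * y s - exp (2 * s) * R (density y s) * x s) (Iic 0) s
  pos : ∀ s ≤ (0 : ℝ), 0 < x s ∧ 0 < y s

namespace IsPositiveSolution

variable {R x y : ℝ → ℝ}

theorem density_pos (h : IsPositiveSolution R x y) {s : ℝ} (hs : s ≤ 0) : 0 < density y s :=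
  mul_pos (exp_pos _) (h.pos s hs).2

theorem hasDerivWithinAt_density (h : IsPositiveSolution R x y) {s : ℝ} (hs : s ≤ 0) :
    HasDerivWithinAt (density y) (-(R (density y s) * x s)) (Iic 0) s := by
  have hexp : HasDerivAt (fun s => exp (-2 * s)) (exp (-2 * s) * -2) s := by
    simpa using ((hasDerivAt_id s).const_mul (-2)).exp
  refine (hexp.hasDerivWithinAt.mul (h.hasDerivWithinAt_snd s hs)).congr_deriv ?_
  have : exp (-2 * s) * exp (2 * s) = 1 := by rw [← exp_add]; simp
  unfold density
  linear_combination (-(R (exp (-2 * s) * y s) * x s)) * this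

theorem exp_mul_fst_le (h : IsPositiveSolution R x y) {s : ℝ} (hs : s ≤ 0) :
    exp s * x s ≤ x 0 := by
  have hmono : MonotoneOn (fun s => exp s * x s) (Iic 0) := by
    refine monotoneOn_of_hasDerivWithinAt_nonneg' (convex_Iic 0)
      (fun s hs => ((hasDerivAt_exp s).hasDerivWithinAt.mul
        (h.hasDerivWithinAt_fst s hs)).congr_deriv (by ring : _ = exp s * y s))
      (fun s hs => mul_nonneg (exp_pos s).le (h.pos s hs).2.le)
  simpa using hmono hs self_mem_Iic hs

variable {P : ℝ}

theorem density_le (h : IsPositiveSolution R x y)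
    (hR : ∀ z, 0 < z → 0 < R z) (hlim : Tendsto (density y) atBot (𝓝 P)) {s : ℝ} (hs : s ≤ 0) :
    density y s ≤ P :=
  le_of_hasDerivWithinAt_nonpos_of_tendsto_atBot (fun _ hs => h.hasDerivWithinAt_density hs)
    (fun s hs => neg_nonpos.2 (mul_pos (hR _ (h.density_pos hs)) (h.pos s hs).1).le) hlim hs

theorem snd_le_three_mul_fst (h : IsPositiveSolution R x y)
    (hR : ∀ z, 0 < z → 0 < R z) (hylim : Tendsto (density y) atBot (𝓝 P))
    (hxlim : Tendsto (density x) atBot (𝓝 (P / 3))) {s : ℝ} (hs : s ≤ 0) :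
    y s ≤ 3 * x s := by
  have hderiv : ∀ s ≤ (0 : ℝ), HasDerivWithinAt (fun s => exp s * (y s - 3 * x s))
      (-(exp (3 * s) * (R (density y s) * x s))) (Iic 0) s := by
    intro s hs
    refine ((hasDerivAt_exp s).hasDerivWithinAt.mul ((h.hasDerivWithinAt_snd s hs).sub
      ((h.hasDerivWithinAt_fst s hs).const_mul 3))).congr_deriv ?_
    have : exp s * exp (2 * s) = exp (3 * s) := by rw [← exp_add]; ring_nf
    simp only [Pi.sub_apply]
    linear_combination (-(R (density y s) * x s)) * this
  have hlim : Tendsto (fun s => exp s * (y s - 3 * x s)) atBot (𝓝 0) := by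
    refine (tendsto_exp_mul_mul_atBot three_pos (hylim.sub (hxlim.const_mul 3))).congr
      fun s => ?_
    have : exp (3 * s) * exp (-2 * s) = exp s := by rw [← exp_add]; ring_nf
    unfold density
    linear_combination (y s - 3 * x s) * this
  have hneg := le_of_hasDerivWithinAt_nonpos_of_tendsto_atBot hderiv
    (fun s hs => neg_nonpos.2 (by
      have := mul_pos (hR _ (h.density_pos hs)) (h.pos s hs).1
      positivity)) hlim hs
  nlinarith [exp_pos s]

variable {η : ℝ}

theorem hasDerivWithinAt_Hfun_density (hη : 0 ≤ η) (h : IsPositiveSolution (Rfun η) x y)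
    {s : ℝ} (hs : s ≤ 0) :
    HasDerivWithinAt (fun s => Hfun η (density y s)) (-x s) (Iic 0) s := by
  have hρ := h.density_pos hs
  refine ((hasDerivAt_Hfun hρ).comp_hasDerivWithinAt s
    (h.hasDerivWithinAt_density hs)).congr_deriv ?_
  linear_combination (-x s) * deriv_Hfun_mul_Rfun hη hρ

theorem two_mul_Hfun_le (hη : 0 ≤ η) (hP : 0 < P) (h : IsPositiveSolution (Rfun η) x y)
    (hylim : Tendsto (density y) atBot (𝓝 P)) (hxlim : Tendsto (density x) atBot (𝓝 (P / 3))) :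
    2 * Hfun η P ≤ 2 * Hfun η (y 0) + y 0 - 2 * x 0 + Rfun η P * x 0 := by
  have hderiv : ∀ s ≤ (0 : ℝ), HasDerivWithinAt
      (fun s => 2 * Hfun η (density y s) + y s - 2 * x s + Rfun η P * x 0 * exp s)
      (Rfun η P * x 0 * exp s - exp (2 * s) * Rfun η (density y s) * x s) (Iic 0) s := by
    intro s hs
    refine (((((h.hasDerivWithinAt_Hfun_density hη hs).const_mul 2).add
      (h.hasDerivWithinAt_snd s hs)).sub ((h.hasDerivWithinAt_fst s hs).const_mul 2)).add
      ((hasDerivAt_exp s).const_mul (Rfun η P * x 0)).hasDerivWithinAt).congr_deriv ?_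
    ring
  have hderiv_nonneg : ∀ s ≤ (0 : ℝ),
      0 ≤ Rfun η P * x 0 * exp s - exp (2 * s) * Rfun η (density y s) * x s := by
    intro s hs
    have hR := Rfun_le_Rfun hη (h.density_pos hs) (h.density_le (fun _ => Rfun_pos hη) hylim hs)
    have hx := h.exp_mul_fst_le hs
    have hexp : exp (2 * s) = exp s * exp s := by rw [← exp_add]; ring_nf
    have := mul_le_mul hR hx (mul_nonneg (exp_pos s).le (h.pos s hs).1.le) (Rfun_pos hη hP).le
    rw [hexp]
    nlinarith [exp_pos s]
  have hlim : Tendsto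
      (fun s => 2 * Hfun η (density y s) + y s - 2 * x s + Rfun η P * x 0 * exp s) atBot
      (𝓝 (2 * Hfun η P + 0 - 2 * 0 + Rfun η P * x 0 * 0)) :=
    (((((continuousAt_Hfun hP).tendsto.comp hylim).const_mul 2).add
      (tendsto_zero_of_tendsto_density hylim)).sub
      ((tendsto_zero_of_tendsto_density hxlim).const_mul 2)).add
      (tendsto_exp_atBot.const_mul _)
  simpa [density] using le_of_hasDerivWithinAt_nonneg_of_tendsto_atBot hderiv hderiv_nonneg
    (by simpa using hlim) le_rfl

end IsPositiveSolution

/-- for a positive trajectory of the simplified Fermi–Dirac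
system (`η ≥ 0`) on `(−∞,0]` with `e^{−2s} y → P > 0` and `e^{−2s} x → P/3`
as `s → −∞`, the normalized mass `m = x(0)` satisfies
`2 H_η(P) − R_η(P) m ≤ m + 2 H_η(3m)`. -/
theorem mass_sup_norm_estimate (η : ℝ) (hη : 0 ≤ η) (P : ℝ) (hP : 0 < P)
    (x y : ℝ → ℝ)
    (hx : ∀ s ≤ (0 : ℝ), HasDerivWithinAt x (y s - x s) (Set.Iic 0) s)
    (hy : ∀ s ≤ (0 : ℝ), HasDerivWithinAt y
      (2 * y s - Real.exp (2 * s) * Rfun η (Real.exp (-2 * s) * y s) * x s)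
      (Set.Iic 0) s)
    (hpos : ∀ s ≤ (0 : ℝ), 0 < x s ∧ 0 < y s)
    (hylim : Filter.Tendsto (fun s => Real.exp (-2 * s) * y s) Filter.atBot (nhds P))
    (hxlim : Filter.Tendsto (fun s => Real.exp (-2 * s) * x s) Filter.atBot (nhds (P / 3))) :
    2 * Hfun η P - Rfun η P * x 0 ≤ x 0 + 2 * Hfun η (3 * x 0) := by
  have h : IsPositiveSolution (Rfun η) x y := ⟨hx, hy, hpos⟩
  have hy0 : y 0 ≤ 3 * x 0 := h.snd_le_three_mul_fst (fun _ => Rfun_pos hη) hylim hxlim le_rfl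
  have hH := Hfun_le_Hfun hη (hpos 0 le_rfl).2 hy0
  linarith [h.two_mul_Hfun_le hη hP hylim hxlim]
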